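/- Let G = (V,E) be a finite undirected unweighted graph and let r, y ∈ V. Suppose there is a shortest path from r to y in G on which a vertex x appears with w being the vertex immediately following x (on the side of y). Then δ(r,w,x) + δ(w,y) ≤ 3·δ(r,y,x) (as an inequality in ℕ∞). -/

import Mathlib

open scoped ENNReal Classical

/-- The graph `G` with vertex `x` "failed": edges incident to `x` are removed,
so that walks in `G.avoid x` are exactly walks of `G` avoiding `x`
(for endpoints different from `x`). -/
def SimpleGraph.avoid {V : Type*} (G : SimpleGraph V) (x : V) : SimpleGraph V where
  Adj a b := G.Adj a b ∧ a ≠ x ∧ b ≠ x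
  symm := ⟨fun _ _ h => ⟨h.1.symm, h.2.2, h.2.1⟩⟩
  loopless := ⟨fun _ h => G.irrefl h.1⟩

/-- `δ(a,b,x)` : the distance (in `ℕ∞`) between `a` and `b` in `G − x`,
with the convention that it is `∞` if `a = x` or `b = x`. -/
noncomputable def davoid {V : Type*} (G : SimpleGraph V) (a b x : V) : ℕ∞ :=
  if a = x ∨ b = x then ⊤ else (G.avoid x).edist a b

/-- `δ(v,B)` : distance from `v` to the set `B`. -/
noncomputable def dset {V : Type*} (G : SimpleGraph V) (v : V) (B : Set V) : ℕ∞ :=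
  ⨅ w ∈ B, G.edist v w

/-- `δ(v,B,x)` : distance from `v` to the set `B` in `G − x`. -/
noncomputable def dsetAvoid {V : Type*} (G : SimpleGraph V) (v : V) (B : Set V) (x : V) : ℕ∞ :=
  ⨅ w ∈ B, davoid G v w x

/-- `Ball(v,A,B) = {w ∈ A : δ(v,w) < δ(v,B)}`. -/
def ball {V : Type*} (G : SimpleGraph V) (v : V) (A B : Set V) : Set V :=
  {w ∈ A | G.edist v w < dset G v B}

/-- `Ball^x(v,A,B) = {w ∈ A : δ(v,w,x) < δ(v,B,x)}`. -/
def ballAvoid {V : Type*} (G : SimpleGraph V) (v : V) (A B : Set V) (x : V) : Set V :=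
  {w ∈ A | davoid G v w x < dsetAvoid G v B x}

/-- `Ball^x(v,A,B,ε) = {w ∈ A : (1+ε)·δ(v,w,x) < δ(v,B,x)}`. -/
def ballTrunc {V : Type*} (G : SimpleGraph V) (v : V) (A B : Set V) (x : V) (ε : ℝ) : Set V :=
  {w ∈ A | ENNReal.ofReal (1 + ε) * (davoid G v w x : ℝ≥0∞) < (dsetAvoid G v B x : ℝ≥0∞)}

/-- `C^x(w,A,B,ε) = {v ∈ V : (1+ε)·δ(v,w,x) < δ(v,B,x)}`. -/
def clusterTrunc {V : Type*} (G : SimpleGraph V) (w : V) (B : Set V) (x : V) (ε : ℝ) : Set V :=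
  {v | ENNReal.ofReal (1 + ε) * (davoid G v w x : ℝ≥0∞) < (dsetAvoid G v B x : ℝ≥0∞)}

/-! The segment of the shortest path `Q` from `w` to `y` avoids `x`, because `Q` is a path and `x`
comes before `w`. Hence `δ(w,y) ≤ δ(w,y,x) ≤ |Q| = δ(r,y) ≤ δ(r,y,x)`, and by the triangle
inequality in `G − x`, `δ(r,w,x) ≤ δ(r,y,x) + δ(y,w,x) ≤ 2·δ(r,y,x)`. -/

namespace SimpleGraph

variable {V : Type*} {G : SimpleGraph V}

theorem Walk.exists_support_eq_of_support_eq_append {u v w : V} {l₁ l₂ : List V}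
    (p : G.Walk u v) (h : p.support = l₁ ++ w :: l₂) :
    ∃ q : G.Walk w v, q.support = w :: l₂ ∧ q.length + l₁.length = p.length := by
  induction l₁ generalizing u with
  | nil =>
    obtain ⟨rfl, -⟩ : u = w ∧ _ := List.cons_eq_cons.mp (p.cons_tail_support.trans h)
    exact ⟨p, h, rfl⟩
  | cons a l₁ ih =>
    cases p with
    | nil => simp at h
    | cons hadj p =>
      obtain ⟨q, hq, hlen⟩ := ih p (List.cons_eq_cons.mp h).2
      exact ⟨q, hq, by simp only [Walk.length_cons, List.length_cons, ← hlen]; omega⟩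

theorem avoid_le (x : V) : G.avoid x ≤ G := fun _ _ h => h.1

theorem avoid_edist_le_length {a b : V} (x : V) (q : G.Walk a b) (hx : x ∉ q.support) :
    (G.avoid x).edist a b ≤ q.length := by
  have hedges : ∀ e ∈ q.edges, e ∈ (G.avoid x).edgeSet := by
    intro e he
    induction e using Sym2.ind with
    | _ c d =>
      exact ⟨q.adj_of_mem_edges he,
        fun h => hx (h ▸ q.fst_mem_support_of_mem_edges he),
        fun h => hx (h ▸ q.snd_mem_support_of_mem_edges he)⟩
  simpa using (q.transfer (G.avoid x) hedges).edist_le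

end SimpleGraph

theorem davoid_eq_edist {V : Type*} (G : SimpleGraph V) {a b x : V} (ha : a ≠ x) (hb : b ≠ x) :
    davoid G a b x = (G.avoid x).edist a b := by
  simp [davoid, ha, hb]

theorem stmt1_general {V : Type*} (G : SimpleGraph V) (r y x w : V)
    (Q : G.Walk r y) (hQ : Q.IsPath) (hQlen : (Q.length : ℕ∞) = G.edist r y)
    (hxw : ∃ l₁ l₂ : List V, Q.support = l₁ ++ x :: w :: l₂) :
    davoid G r w x + G.edist w y ≤ 3 * davoid G r y x := by
  obtain ⟨l₁, l₂, hsup⟩ := hxw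
  by_cases hend : r = x ∨ y = x
  · simp [davoid, hend]
  obtain ⟨hr, hy⟩ := not_or.mp hend
  have hx : x ∉ w :: l₂ :=
    (List.nodup_cons.mp (List.nodup_append.mp (hsup ▸ hQ.support_nodup)).2.1).1
  have hw : w ≠ x := fun h => hx (h ▸ List.mem_cons_self)
  obtain ⟨q, hqsup, hqlen⟩ :=
    Q.exists_support_eq_of_support_eq_append (l₁ := l₁ ++ [x]) (by simpa using hsup)
  set A := (G.avoid x).edist r y
  have hwy : (G.avoid x).edist w y ≤ A :=
    calc (G.avoid x).edist w y ≤ q.length := G.avoid_edist_le_length x q (hqsup ▸ hx)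
      _ ≤ Q.length := by exact_mod_cast hqlen ▸ Nat.le_add_right _ _
      _ ≤ A := hQlen ▸ SimpleGraph.edist_anti (G.avoid_le x)
  rw [davoid_eq_edist G hr hw, davoid_eq_edist G hr hy]
  calc (G.avoid x).edist r w + G.edist w y
      ≤ (A + (G.avoid x).edist y w) + (G.avoid x).edist w y :=
        add_le_add SimpleGraph.edist_triangle (SimpleGraph.edist_anti (G.avoid_le x))
    _ ≤ (A + A) + A := by rw [SimpleGraph.edist_comm (u := y)]; gcongr
    _ = 3 * A := by ring

/-- if on some shortest path `Q` from `r` to `y` the vertex `w`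
immediately follows the vertex `x` (on the side of `y`), then
`δ(r,w,x) + δ(w,y) ≤ 3·δ(r,y,x)`. -/
theorem stmt1 {V : Type*} [Fintype V] (G : SimpleGraph V) (r y x w : V)
    (Q : G.Walk r y) (hQ : Q.IsPath) (hQlen : (Q.length : ℕ∞) = G.edist r y)
    (hxw : ∃ l₁ l₂ : List V, Q.support = l₁ ++ x :: w :: l₂) :
    davoid G r w x + G.edist w y ≤ 3 * davoid G r y x :=
  stmt1_general G r y x w Q hQ hQlen hxw
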